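/- In the rough topology on the set of approach regions ending at w ∈ ∂D, the set of very oscillatory approach regions is open, the set of nontangential approach regions is closed with empty interior, and the set of tangential approach regions is closed with empty interior. -/

import Mathlib

open Metric Set

noncomputable section

def unitDisc : Set ℂ := {z | ‖z‖ < 1}

def tau (w z : ℂ) : ℝ := (1 - ‖z‖) / ‖w - z‖

/-- `A_♮ = sup_{r>0} inf_{z ∈ A ∩ B(w,r)} τ(w,z)` -/
def lowTau (w : ℂ) (A : Set ℂ) : ℝ :=
  sSup ((fun r => sInf (tau w '' (A ∩ ball w r))) '' Ioi (0:ℝ))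

/-- `A^♮ = inf_{r>0} sup_{z ∈ A ∩ B(w,r)} τ(w,z)` -/
def highTau (w : ℂ) (A : Set ℂ) : ℝ :=
  sInf ((fun r => sSup (tau w '' (A ∩ ball w r))) '' Ioi (0:ℝ))

def NontangentialAt (w : ℂ) (A : Set ℂ) : Prop := 0 < lowTau w A
def TangentialAt (w : ℂ) (A : Set ℂ) : Prop := highTau w A = 0
def VeryOscAt (w : ℂ) (A : Set ℂ) : Prop := lowTau w A = 0 ∧ 0 < highTau w A

/-- The approach regions ending at `w`. -/
def AR (w : ℂ) := {A : Set ℂ // A ⊆ unitDisc ∧ w ∈ closure A}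

/-- The rough topology on the approach regions ending at `w`: generated by the
subbase of sets `O(A,r) = {A' : A' ⊇ A ∩ B(w,r)}`. -/
def roughTopology (w : ℂ) : TopologicalSpace (AR w) :=
  TopologicalSpace.generateFrom
    {O | ∃ B : AR w, ∃ r : ℝ, 0 < r ∧ O = {A' : AR w | B.1 ∩ ball w r ⊆ A'.1}}

/-!
`A_♮` and `A^♮` only see the germ of `A` at `w`, monotonically: enlarging the germ can only
lower `A_♮` and raise `A^♮`. Every set `O(A,r)` is a neighbourhood of `A` and every rough-open
set is closed under enlargement, so `{A_♮ = 0}` and `{A^♮ > 0}` are open; their intersection is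
the set of very oscillatory regions. For the interiors: adding to any region the horn
`{τ(w,z) ≤ |w - z|}`, tangent to the circle at `w`, forces `A_♮ = 0`, adding the radius
`{τ(w,z) = 1}` forces `A^♮ ≥ 1`, and both enlargements stay in every open set containing the
region.
-/

section Tau

variable {w : ℂ}

lemma tau_nonneg {z : ℂ} (hz : z ∈ unitDisc) : 0 ≤ tau w z :=
  div_nonneg (sub_nonneg.mpr (le_of_lt hz)) (norm_nonneg _)

lemma tau_le_one (hw : 1 ≤ ‖w‖) (z : ℂ) : tau w z ≤ 1 :=
  div_le_one_of_le₀ (by linarith [norm_sub_norm_le w z]) (norm_nonneg _)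

lemma bddAbove_tau_image (hw : 1 ≤ ‖w‖) (s : Set ℂ) : BddAbove (tau w '' s) :=
  ⟨1, forall_mem_image.mpr fun z _ => tau_le_one hw z⟩

lemma exists_tau_one_le_norm_one_sub {δ : ℝ} (hδ : 0 < δ) :
    ∃ u : ℂ, ‖u‖ < 1 ∧ ‖1 - u‖ < δ ∧ tau 1 u ≤ ‖1 - u‖ := by
  set t := min (δ / 3) (1 / 2)
  have ht : 0 < t := lt_min (by positivity) one_half_pos
  have ht₁ : t ≤ 1 / 2 := min_le_right _ _
  have htδ : t ≤ δ / 3 := min_le_left _ _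
  set u : ℂ := ⟨1 - t ^ 2, t⟩
  have hu : ‖u‖ ^ 2 = 1 - t ^ 2 + t ^ 4 := by
    rw [Complex.sq_norm, Complex.normSq_mk]; ring
  have hu₁ : ‖1 - u‖ ^ 2 = t ^ 2 + t ^ 4 := by
    rw [Complex.sq_norm, Complex.normSq_apply]
    simp only [Complex.sub_re, Complex.one_re, Complex.sub_im, Complex.one_im, u]
    ring
  have ht₂ : t ^ 4 < t ^ 2 := by
    have h : t ^ 2 < 1 := by nlinarith
    nlinarith [mul_lt_mul_of_pos_right h (pow_pos ht 2)]
  have hu_lt : ‖u‖ < 1 := lt_of_pow_lt_pow_left₀ 2 zero_le_one (by rw [hu, one_pow]; linarith)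
  refine ⟨u, hu_lt, lt_of_pow_lt_pow_left₀ 2 hδ.le (by rw [hu₁]; nlinarith), ?_⟩
  have hpos : 0 < ‖1 - u‖ := by nlinarith [norm_nonneg (1 - u), pow_pos ht 2]
  -- `1 - ‖u‖ ≤ 1 - ‖u‖ ^ 2 = t ^ 2 - t ^ 4 ≤ ‖1 - u‖ ^ 2`
  rw [tau, div_le_iff₀ hpos]
  nlinarith [norm_nonneg u]

lemma exists_tau_one_eq_one {δ : ℝ} (hδ : 0 < δ) :
    ∃ u : ℂ, ‖u‖ < 1 ∧ ‖1 - u‖ < δ ∧ tau 1 u = 1 := by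
  set t := min (δ / 2) 1
  have ht : 0 < t := lt_min (by positivity) one_pos
  have ht₁ : t ≤ 1 := min_le_right _ _
  have htδ : t < δ := (min_le_left _ _).trans_lt (by linarith)
  have hu : ‖((1 - t : ℝ) : ℂ)‖ = 1 - t := Complex.norm_of_nonneg (by linarith)
  have hu₁ : ‖1 - ((1 - t : ℝ) : ℂ)‖ = t := by
    rw [show (1 : ℂ) - ((1 - t : ℝ) : ℂ) = t by push_cast; ring]
    exact Complex.norm_of_nonneg ht.le
  refine ⟨_, by rw [hu]; linarith, by rwa [hu₁], ?_⟩
  rw [tau, hu, hu₁, sub_sub_cancel, div_self ht.ne']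

end Tau

section Rotation

variable {w : ℂ}

lemma norm_sub_mul_left (hw : ‖w‖ = 1) (u : ℂ) : ‖w - w * u‖ = ‖1 - u‖ := by
  rw [← mul_one_sub, norm_mul, hw, one_mul]

lemma tau_mul_left (hw : ‖w‖ = 1) (u : ℂ) : tau w (w * u) = tau 1 u := by
  rw [tau, tau, norm_sub_mul_left hw, norm_mul, hw, one_mul]

lemma mul_left_mem_unitDisc_inter_ball (hw : ‖w‖ = 1) {u : ℂ} {δ : ℝ} (hu : ‖u‖ < 1)
    (hu₁ : ‖1 - u‖ < δ) : w * u ∈ unitDisc ∩ ball w δ := by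
  refine ⟨?_, ?_⟩
  · show ‖w * u‖ < 1
    rwa [norm_mul, hw, one_mul]
  · rwa [mem_ball', dist_eq_norm, norm_sub_mul_left hw]

lemma exists_mem_unitDisc_inter_ball_tau_le (hw : ‖w‖ = 1) {δ : ℝ} (hδ : 0 < δ) :
    ∃ z ∈ unitDisc ∩ ball w δ, tau w z ≤ ‖w - z‖ := by
  obtain ⟨u, hu, hu₁, hτ⟩ := exists_tau_one_le_norm_one_sub hδ
  exact ⟨w * u, mul_left_mem_unitDisc_inter_ball hw hu hu₁, by
    rwa [tau_mul_left hw, norm_sub_mul_left hw]⟩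

lemma exists_mem_unitDisc_inter_ball_tau_eq_one (hw : ‖w‖ = 1) {δ : ℝ} (hδ : 0 < δ) :
    ∃ z ∈ unitDisc ∩ ball w δ, tau w z = 1 := by
  obtain ⟨u, hu, hu₁, hτ⟩ := exists_tau_one_eq_one hδ
  exact ⟨w * u, mul_left_mem_unitDisc_inter_ball hw hu hu₁, by rwa [tau_mul_left hw]⟩

end Rotation

lemma inter_ball_subset_of_inter_ball_subset {α : Type*} [PseudoMetricSpace α] {w : α}
    {A A' : Set α} {r r₀ : ℝ} (h : A ∩ ball w r₀ ⊆ A') (hr : r ≤ r₀) : A ∩ ball w r ⊆ A' ∩ ball w r :=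
  fun _ hz => ⟨h ⟨hz.1, ball_subset_ball hr hz.2⟩, hz.2⟩

namespace AR

variable {w : ℂ}

lemma nonempty_inter_ball (A : AR w) {r : ℝ} (hr : 0 < r) : (A.1 ∩ ball w r).Nonempty := by
  obtain ⟨z, hzA, hz⟩ := Metric.mem_closure_iff.mp A.2.2 r hr
  exact ⟨z, hzA, by rwa [mem_ball, dist_comm]⟩

lemma bddBelow_tau_image (A : AR w) (r : ℝ) : BddBelow (tau w '' (A.1 ∩ ball w r)) :=
  ⟨0, forall_mem_image.mpr fun _ hz => tau_nonneg (A.2.1 hz.1)⟩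

lemma lowTau_nonneg (A : AR w) : 0 ≤ lowTau w A.1 :=
  Real.sSup_nonneg <| forall_mem_image.mpr fun _ _ =>
    Real.sInf_nonneg <| forall_mem_image.mpr fun _ hz => tau_nonneg (A.2.1 hz.1)

lemma highTau_nonneg (A : AR w) : 0 ≤ highTau w A.1 :=
  Real.sInf_nonneg <| forall_mem_image.mpr fun _ _ =>
    Real.sSup_nonneg <| forall_mem_image.mpr fun _ hz => tau_nonneg (A.2.1 hz.1)

lemma sInf_tau_le_lowTau (hw : 1 ≤ ‖w‖) (A : AR w) {r : ℝ} (hr : 0 < r) :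
    sInf (tau w '' (A.1 ∩ ball w r)) ≤ lowTau w A.1 := by
  refine le_csSup ⟨1, forall_mem_image.mpr fun ρ hρ => ?_⟩ (mem_image_of_mem _ hr)
  obtain ⟨z, hz⟩ := A.nonempty_inter_ball hρ
  exact csInf_le_of_le (A.bddBelow_tau_image ρ) (mem_image_of_mem _ hz) (tau_le_one hw z)

lemma highTau_le_sSup_tau (A : AR w) {r : ℝ} (hr : 0 < r) :
    highTau w A.1 ≤ sSup (tau w '' (A.1 ∩ ball w r)) :=
  csInf_le ⟨0, forall_mem_image.mpr fun _ _ =>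
    Real.sSup_nonneg <| forall_mem_image.mpr fun _ hz => tau_nonneg (A.2.1 hz.1)⟩
    (mem_image_of_mem _ hr)

lemma lowTau_le_of_inter_ball_subset (hw : 1 ≤ ‖w‖) {A A' : AR w} {r₀ : ℝ} (hr₀ : 0 < r₀)
    (h : A.1 ∩ ball w r₀ ⊆ A'.1) : lowTau w A'.1 ≤ lowTau w A.1 := by
  refine Real.sSup_le (forall_mem_image.mpr fun r hr => ?_) A.lowTau_nonneg
  have hρ : 0 < min r r₀ := lt_min hr hr₀
  calc sInf (tau w '' (A'.1 ∩ ball w r))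
      ≤ sInf (tau w '' (A'.1 ∩ ball w (min r r₀))) :=
        csInf_le_csInf (A'.bddBelow_tau_image r) ((A'.nonempty_inter_ball hρ).image _)
          (image_mono (inter_subset_inter_right _ (ball_subset_ball (min_le_left _ _))))
    _ ≤ sInf (tau w '' (A.1 ∩ ball w (min r r₀))) :=
        csInf_le_csInf (A'.bddBelow_tau_image _) ((A.nonempty_inter_ball hρ).image _)
          (image_mono (inter_ball_subset_of_inter_ball_subset h (min_le_right _ _)))
    _ ≤ lowTau w A.1 := A.sInf_tau_le_lowTau hw hρ

lemma highTau_le_of_inter_ball_subset (hw : 1 ≤ ‖w‖) {A A' : AR w} {r₀ : ℝ} (hr₀ : 0 < r₀)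
    (h : A.1 ∩ ball w r₀ ⊆ A'.1) : highTau w A.1 ≤ highTau w A'.1 := by
  refine le_csInf (nonempty_Ioi.image _) (forall_mem_image.mpr fun r hr => ?_)
  have hρ : 0 < min r r₀ := lt_min hr hr₀
  calc highTau w A.1
      ≤ sSup (tau w '' (A.1 ∩ ball w (min r r₀))) := A.highTau_le_sSup_tau hρ
    _ ≤ sSup (tau w '' (A'.1 ∩ ball w (min r r₀))) :=
        csSup_le_csSup (bddAbove_tau_image hw _) ((A.nonempty_inter_ball hρ).image _)
          (image_mono (inter_ball_subset_of_inter_ball_subset h (min_le_right _ _)))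
    _ ≤ sSup (tau w '' (A'.1 ∩ ball w r)) :=
        csSup_le_csSup (bddAbove_tau_image hw _) ((A'.nonempty_inter_ball hρ).image _)
          (image_mono (inter_subset_inter_right _ (ball_subset_ball (min_le_left _ _))))

lemma lowTau_eq_zero_of_forall_exists (A : AR w)
    (h : ∀ r > 0, ∃ z ∈ A.1 ∩ ball w r, tau w z < r) : lowTau w A.1 = 0 := by
  refine le_antisymm (Real.sSup_le (forall_mem_image.mpr fun r hr => ?_) le_rfl) A.lowTau_nonneg
  refine le_of_forall_pos_lt_add fun ε hε => ?_
  obtain ⟨z, ⟨hzA, hz⟩, hτ⟩ := h (min r ε) (lt_min hr hε)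
  calc sInf (tau w '' (A.1 ∩ ball w r)) ≤ tau w z :=
        csInf_le (A.bddBelow_tau_image r)
          (mem_image_of_mem _ ⟨hzA, ball_subset_ball (min_le_left _ _) hz⟩)
    _ < 0 + ε := by linarith [min_le_right r ε]

lemma le_highTau_of_forall_exists (hw : 1 ≤ ‖w‖) (A : AR w) {c : ℝ}
    (h : ∀ r > 0, ∃ z ∈ A.1 ∩ ball w r, c ≤ tau w z) : c ≤ highTau w A.1 :=
  le_csInf (nonempty_Ioi.image _) <| forall_mem_image.mpr fun r hr => by
    obtain ⟨z, hz, hc⟩ := h r hr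
    exact hc.trans (le_csSup (bddAbove_tau_image hw _) (mem_image_of_mem _ hz))

def union (A : AR w) (T : Set ℂ) (hT : T ⊆ unitDisc) : AR w :=
  ⟨A.1 ∪ T, union_subset A.2.1 hT, closure_mono subset_union_left A.2.2⟩

lemma lowTau_union_horn (hw : ‖w‖ = 1) (A : AR w) :
    lowTau w (A.union {z ∈ unitDisc | tau w z ≤ ‖w - z‖} (sep_subset _ _)).1 = 0 :=
  lowTau_eq_zero_of_forall_exists _ fun r hr => by
    obtain ⟨z, ⟨hzD, hz⟩, hτ⟩ := exists_mem_unitDisc_inter_ball_tau_le hw hr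
    exact ⟨z, ⟨Or.inr ⟨hzD, hτ⟩, hz⟩, hτ.trans_lt (by rwa [mem_ball', dist_eq_norm] at hz)⟩

lemma one_le_highTau_union_radius (hw : ‖w‖ = 1) (A : AR w) :
    1 ≤ highTau w (A.union {z ∈ unitDisc | tau w z = 1} (sep_subset _ _)).1 :=
  le_highTau_of_forall_exists hw.ge _ fun r hr => by
    obtain ⟨z, ⟨hzD, hz⟩, hτ⟩ := exists_mem_unitDisc_inter_ball_tau_eq_one hw hr
    exact ⟨z, ⟨Or.inr ⟨hzD, hτ⟩, hz⟩, hτ.ge⟩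

end AR

section RoughTopology

attribute [local instance] roughTopology

variable {w : ℂ}

lemma AR.mem_of_isOpen_of_subset {U : Set (AR w)} (hU : IsOpen U) {A A' : AR w} (hA : A ∈ U)
    (h : A.1 ⊆ A'.1) : A' ∈ U := by
  induction hU with
  | basic O hO =>
    obtain ⟨B, r, -, rfl⟩ := hO
    exact hA.trans h
  | univ => trivial
  | inter s t _ _ ihs iht => exact ⟨ihs hA.1, iht hA.2⟩
  | sUnion S _ ih =>
    obtain ⟨s, hs, hAs⟩ := hA
    exact ⟨s, hs, ih s hs hAs⟩

lemma AR.isOpen_of_forall_exists_inter_ball_subset {S : Set (AR w)}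
    (h : ∀ A ∈ S, ∃ r > 0, ∀ A' : AR w, A.1 ∩ ball w r ⊆ A'.1 → A' ∈ S) : IsOpen S :=
  isOpen_iff_forall_mem_open.mpr fun A hA =>
    let ⟨r, hr, hS⟩ := h A hA
    ⟨{A' | A.1 ∩ ball w r ⊆ A'.1}, hS, TopologicalSpace.isOpen_generateFrom_of_mem ⟨A, r, hr, rfl⟩,
      inter_subset_left⟩

lemma AR.interior_eq_empty_of_forall_exists_superset {S : Set (AR w)}
    (h : ∀ A : AR w, ∃ A' : AR w, A.1 ⊆ A'.1 ∧ A' ∉ S) : interior S = ∅ :=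
  eq_empty_of_forall_notMem fun A hA => by
    obtain ⟨A', hAA', hA'⟩ := h A
    exact hA' (interior_subset (AR.mem_of_isOpen_of_subset isOpen_interior hA hAA'))

lemma isClosed_setOf_nontangentialAt (hw : 1 ≤ ‖w‖) :
    IsClosed {A : AR w | NontangentialAt w A.1} := by
  refine isOpen_compl_iff.mp <| AR.isOpen_of_forall_exists_inter_ball_subset fun A hA =>
    ⟨1, one_pos, fun A' h hA' => hA ?_⟩
  exact hA'.trans_le (AR.lowTau_le_of_inter_ball_subset hw one_pos h)

lemma isClosed_setOf_tangentialAt (hw : 1 ≤ ‖w‖) :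
    IsClosed {A : AR w | TangentialAt w A.1} := by
  refine isOpen_compl_iff.mp <| AR.isOpen_of_forall_exists_inter_ball_subset fun A hA =>
    ⟨1, one_pos, fun A' h hA' => hA (le_antisymm ?_ A.highTau_nonneg)⟩
  exact (AR.highTau_le_of_inter_ball_subset hw one_pos h).trans_eq hA'

lemma interior_setOf_nontangentialAt (hw : ‖w‖ = 1) :
    interior {A : AR w | NontangentialAt w A.1} = ∅ :=
  AR.interior_eq_empty_of_forall_exists_superset fun A =>
    ⟨A.union {z ∈ unitDisc | tau w z ≤ ‖w - z‖} (sep_subset _ _), subset_union_left,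
      fun h => ne_of_gt h (A.lowTau_union_horn hw)⟩

lemma interior_setOf_tangentialAt (hw : ‖w‖ = 1) :
    interior {A : AR w | TangentialAt w A.1} = ∅ :=
  AR.interior_eq_empty_of_forall_exists_superset fun A =>
    ⟨A.union {z ∈ unitDisc | tau w z = 1} (sep_subset _ _), subset_union_left,
      fun h => by
        have h' : highTau w _ = 0 := h
        linarith [A.one_le_highTau_union_radius hw]⟩

lemma isOpen_setOf_veryOscAt (hw : 1 ≤ ‖w‖) : IsOpen {A : AR w | VeryOscAt w A.1} := by
  have hS : {A : AR w | VeryOscAt w A.1} =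
      {A : AR w | NontangentialAt w A.1}ᶜ ∩ {A : AR w | TangentialAt w A.1}ᶜ := by
    ext A
    have := A.lowTau_nonneg
    have := A.highTau_nonneg
    simp only [VeryOscAt, NontangentialAt, TangentialAt, mem_inter_iff, mem_compl_iff]
    grind
  rw [hS]
  exact (isClosed_setOf_nontangentialAt hw).isOpen_compl.inter
    (isClosed_setOf_tangentialAt hw).isOpen_compl

end RoughTopology

theorem stmt16 (w : ℂ) (hw : ‖w‖ = 1) :
    @IsOpen (AR w) (roughTopology w) {A : AR w | VeryOscAt w A.1} ∧
    @IsClosed (AR w) (roughTopology w) {A : AR w | NontangentialAt w A.1} ∧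
    @interior (AR w) (roughTopology w) {A : AR w | NontangentialAt w A.1} = ∅ ∧
    @IsClosed (AR w) (roughTopology w) {A : AR w | TangentialAt w A.1} ∧
    @interior (AR w) (roughTopology w) {A : AR w | TangentialAt w A.1} = ∅ :=
  ⟨isOpen_setOf_veryOscAt hw.ge, isClosed_setOf_nontangentialAt hw.ge,
    interior_setOf_nontangentialAt hw, isClosed_setOf_tangentialAt hw.ge,
    interior_setOf_tangentialAt hw⟩
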